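/- arXiv:1110.1419 — 3 statements merged into one kernel-verified Lean document; each statement's English description precedes it below -/
import Mathlib

section
/- Consider the vector field W = Σ_i λ(α,β)(α_i + w_i(α,β)) ∂_{α_i} + r_i(α,β) ∂_{β_i} on a neighborhood of {α = 0} in ℝ^{n-1}_α × ℝ^{n-1}_β, where λ is smooth and nonvanishing, and w_i, r_i vanish to second order on {α = 0}. In polar-blowup coordinates α = r ω (r ≥ 0, ω ∈ S^{n-2}), W lifts to a smooth vector field of the form r·V where V is smooth and transverse to the front face {r = 0}. -/
open Finset

/-- The blow-up computation: for the vector field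
`W = Σ_i λ(α,β)(α_i + w_i(α,β)) ∂_{α_i} + r_i(α,β) ∂_{β_i}` with `λ` smooth nonvanishing and
`w_i, r_i` vanishing to second order on `{α = 0}` (written `w_i = Σ α_j α_l W_{ijl}`,
`r_i = Σ α_j α_l R_{ijl}`), in polar-blowup coordinates `α = ρ • ω` (`ω` on the unit sphere)
`W` lifts to `ρ · V` with `V` smooth: its `∂_ρ` component is `ρ·A`, its `∂_{ω_i}` components
give remainders `ρ²·B_i`, its `∂_{β_i}` components are `ρ²·C_i`, and `V` is transverse to the
front face `{ρ = 0}` since `A(0, ω, β) ≠ 0`. -/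
theorem blowup_radial_vector_field {k : ℕ}
    (lam : ((Fin k → ℝ) × (Fin k → ℝ)) → ℝ) (hlam : ContDiff ℝ (⊤ : ℕ∞) lam)
    (hlam0 : ∀ q, lam q ≠ 0)
    (w r : Fin k → ((Fin k → ℝ) × (Fin k → ℝ)) → ℝ)
    (W2 R2 : Fin k → Fin k → Fin k → ((Fin k → ℝ) × (Fin k → ℝ)) → ℝ)
    (hW2 : ∀ i j l, ContDiff ℝ (⊤ : ℕ∞) (W2 i j l)) (hR2 : ∀ i j l, ContDiff ℝ (⊤ : ℕ∞) (R2 i j l))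
    (hw : ∀ i q, w i q = ∑ j, ∑ l, q.1 j * q.1 l * W2 i j l q)
    (hr : ∀ i q, r i q = ∑ j, ∑ l, q.1 j * q.1 l * R2 i j l q) :
    ∃ A : (ℝ × (Fin k → ℝ) × (Fin k → ℝ)) → ℝ,
    ∃ B C : Fin k → (ℝ × (Fin k → ℝ) × (Fin k → ℝ)) → ℝ,
      ContDiff ℝ (⊤ : ℕ∞) A ∧ (∀ i, ContDiff ℝ (⊤ : ℕ∞) (B i)) ∧ (∀ i, ContDiff ℝ (⊤ : ℕ∞) (C i)) ∧
      ∀ (ρ : ℝ) (ω β : Fin k → ℝ), (∑ j, ω j ^ 2) = 1 →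
        ((∑ i, ω i * (lam (ρ • ω, β) * (ρ * ω i + w i (ρ • ω, β)))) = ρ * A (ρ, ω, β)) ∧
        (∀ i, lam (ρ • ω, β) * (ρ * ω i + w i (ρ • ω, β))
            - ω i * ∑ j, ω j * (lam (ρ • ω, β) * (ρ * ω j + w j (ρ • ω, β)))
          = ρ ^ 2 * B i (ρ, ω, β)) ∧
        (∀ i, r i (ρ • ω, β) = ρ ^ 2 * C i (ρ, ω, β)) ∧
        A (0, ω, β) ≠ 0 := by
  classical
  set Φ : (ℝ × (Fin k → ℝ) × (Fin k → ℝ)) → ((Fin k → ℝ) × (Fin k → ℝ)) :=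
    fun p => (p.1 • p.2.1, p.2.2) with hΦdef
  have hΦ : ContDiff ℝ (⊤ : ℕ∞) Φ :=
    (contDiff_fst.smul contDiff_snd.fst).prodMk contDiff_snd.snd
  have hcomp : ∀ i : Fin k, ContDiff ℝ (⊤ : ℕ∞) (fun p : ℝ × (Fin k → ℝ) × (Fin k → ℝ) => p.2.1 i) :=
    fun i => (ContinuousLinearMap.proj i : (Fin k → ℝ) →L[ℝ] ℝ).contDiff.comp
      contDiff_snd.fst
  set wt : Fin k → (ℝ × (Fin k → ℝ) × (Fin k → ℝ)) → ℝ :=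
    fun i p => ∑ j, ∑ l, p.2.1 j * p.2.1 l * W2 i j l (Φ p) with hwtdef
  have hwt : ∀ i, ContDiff ℝ (⊤ : ℕ∞) (wt i) := fun i =>
    ContDiff.sum fun j _ => ContDiff.sum fun l _ =>
      ((hcomp j).mul (hcomp l)).mul ((hW2 i j l).comp hΦ)
  set S : (ℝ × (Fin k → ℝ) × (Fin k → ℝ)) → ℝ := fun p => ∑ i, p.2.1 i * wt i p with hSdef
  have hS : ContDiff ℝ (⊤ : ℕ∞) S := ContDiff.sum fun i _ => (hcomp i).mul (hwt i)
  refine ⟨fun p => lam (Φ p) * ((∑ j, p.2.1 j ^ 2) + p.1 * S p),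
    fun i p => lam (Φ p) * (wt i p - p.2.1 i * S p),
    fun i p => ∑ j, ∑ l, p.2.1 j * p.2.1 l * R2 i j l (Φ p),
    ?_, ?_, ?_, ?_⟩
  · exact (hlam.comp hΦ).mul ((ContDiff.sum fun j _ => (hcomp j).pow 2).add
      (contDiff_fst.mul hS))
  · exact fun i => (hlam.comp hΦ).mul ((hwt i).sub ((hcomp i).mul hS))
  · exact fun i => ContDiff.sum fun j _ => ContDiff.sum fun l _ =>
      ((hcomp j).mul (hcomp l)).mul ((hR2 i j l).comp hΦ)
  intro ρ ω β hω
  have key : ∀ X : Fin k → Fin k → ℝ,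
      (∑ j, ∑ l, (ρ • ω) j * (ρ • ω) l * X j l) = ρ ^ 2 * ∑ j, ∑ l, ω j * ω l * X j l := by
    intro X
    rw [Finset.mul_sum]
    refine Finset.sum_congr rfl fun j _ => ?_
    rw [Finset.mul_sum]
    refine Finset.sum_congr rfl fun l _ => ?_
    simp only [Pi.smul_apply, smul_eq_mul]; ring
  have hwρ : ∀ i, w i (ρ • ω, β) = ρ ^ 2 * wt i (ρ, ω, β) := by
    intro i; rw [hw]; exact key _
  have main : (∑ i, ω i * (lam (ρ • ω, β) * (ρ * ω i + w i (ρ • ω, β))))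
      = ρ * (lam (ρ • ω, β) * ((∑ j, ω j ^ 2) + ρ * S (ρ, ω, β))) := by
    have : (∑ i, ω i * (lam (ρ • ω, β) * (ρ * ω i + w i (ρ • ω, β))))
        = ∑ i, (ρ * (lam (ρ • ω, β) * ω i ^ 2)
            + ρ * (ρ * (lam (ρ • ω, β) * (ω i * wt i (ρ, ω, β))))) := by
      refine Finset.sum_congr rfl fun i _ => ?_
      rw [hwρ i]; ring
    rw [this, Finset.sum_add_distrib]
    have h1 : (∑ i, (ρ * (lam (ρ • ω, β) * ω i ^ 2)))
        = ρ * (lam (ρ • ω, β) * ∑ j, ω j ^ 2) := by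
      rw [Finset.mul_sum, Finset.mul_sum]
    have h2 : (∑ i, ρ * (ρ * (lam (ρ • ω, β) * (ω i * wt i (ρ, ω, β)))))
        = ρ * (lam (ρ • ω, β) * (ρ * S (ρ, ω, β))) := by
      simp only [hSdef, Finset.mul_sum]
      exact Finset.sum_congr rfl fun i _ => by ring
    rw [h1, h2]
    ring
  refine ⟨main, ?_, ?_, ?_⟩
  · intro i
    rw [main, hwρ i, hω]
    ring
  · intro i
    rw [hr]; exact key _
  · have : Φ (0, ω, β) = (0, β) := by
      simp [hΦdef]
    simp only [this, zero_mul, mul_zero, add_zero, hω, zero_smul]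
    simpa using hlam0 ((0 : Fin k → ℝ), β)
end

section
/- Suppose operators (on a Hilbert space, or formally in a *-algebra with a positivity notion) satisfy the commutator identity (1/2i)(B²P − P*B²) = ±(G₁*G₁ + G₂*G₂) + E + F and the factorization B² = G₂H + J. Then for any c with 0 < c < 2 and any u for which all pairings are defined, ‖G₁u‖² + (1 − c/2)‖G₂u‖² ≤ (1/(2c))‖HPu‖² + |Im⟨u, JPu⟩| + |⟨u, Eu⟩| + |⟨u, Fu⟩|. -/
/-!
Pairing the commutator identity with `u` gives
`Im⟨u, B²Pu⟩ = ±(‖G₁u‖² + ‖G₂u‖²) + Re⟨u, Eu⟩ + Re⟨u, Fu⟩`, so whatever the sign,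
`‖G₁u‖² + ‖G₂u‖² ≤ |Im⟨u, B²Pu⟩| + |⟨u, Eu⟩| + |⟨u, Fu⟩|`. Since `G₂` is self-adjoint,
the factorization splits `Im⟨u, B²Pu⟩` into `Im⟨G₂u, HPu⟩ + Im⟨u, JPu⟩`, and the first term
is at most `(c/2)‖G₂u‖² + (1/(2c))‖HPu‖²` by Cauchy–Schwarz and Young.
-/

open ContinuousLinearMap

open scoped InnerProductSpace

section Operators

variable {H : Type*} [NormedAddCommGroup H] [InnerProductSpace ℂ H] [CompleteSpace H]

theorem inner_sub_adjoint_apply_self (T : H →L[ℂ] H) (u : H) :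
    ⟪u, (T - adjoint T) u⟫_ℂ = (2 * (⟪u, T u⟫_ℂ).im : ℝ) * Complex.I := by
  rw [sub_apply, inner_sub_right, adjoint_inner_right, ← inner_conj_symm (T u), Complex.sub_conj]

theorem im_inner_apply_self_eq_of_commutator_eq {T S : H →L[ℂ] H}
    (h : (1 / (2 * Complex.I)) • (T - adjoint T) = S) (u : H) :
    ((⟪u, T u⟫_ℂ).im : ℂ) = ⟪u, S u⟫_ℂ := by
  rw [← h, smul_apply, inner_smul_right, inner_sub_adjoint_apply_self]
  push_cast
  field_simp

theorem im_inner_apply_eq_of_eq_comp_add {G K J A : H →L[ℂ] H} (hG : adjoint G = G)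
    (hA : A = G ∘L K + J) (u v : H) :
    (⟪u, A v⟫_ℂ).im = (⟪G u, K v⟫_ℂ).im + (⟪u, J v⟫_ℂ).im := by
  rw [hA, add_apply, comp_apply, inner_add_right, ← adjoint_inner_left, hG, Complex.add_im]

end Operators

theorem Complex.le_abs_add_norm_add_norm_of_ofReal_eq {σ e f : ℂ} (hσ : σ = 1 ∨ σ = -1)
    {r x : ℝ} (hx : 0 ≤ x) (h : (r : ℂ) = σ * x + e + f) : x ≤ |r| + ‖e‖ + ‖f‖ := by
  have hre := congrArg Complex.re h
  rw [Complex.ofReal_re, Complex.add_re, Complex.add_re] at hre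
  have hσx : |(σ * x).re| = x := by
    rcases hσ with rfl | rfl <;> simp [abs_of_nonneg hx]
  calc x = |r - e.re - f.re| := by rw [← hσx, hre]; ring_nf
    _ ≤ |r| + |e.re| + |f.re| := (abs_sub _ _).trans (add_le_add_left (abs_sub _ _) _)
    _ ≤ |r| + ‖e‖ + ‖f‖ := by gcongr <;> exact Complex.abs_re_le_norm _

/-- The core a priori inequality of the positive commutator argument: if
`(1/2i)(B²P − P*B²) = ±(G₁*G₁ + G₂*G₂) + E + F` and `B² = G₂H + J` (with `B, G₂`
self-adjoint), then for any `0 < c < 2` and any `u`,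
`‖G₁u‖² + (1 − c/2)‖G₂u‖² ≤ (1/(2c))‖HPu‖² + |Im⟨u, JPu⟩| + |⟨u, Eu⟩| + |⟨u, Fu⟩|`. -/
theorem commutator_inequality {H : Type*} [NormedAddCommGroup H]
    [InnerProductSpace ℂ H] [CompleteSpace H]
    (B P G₁ G₂ E F Hop J : H →L[ℂ] H)
    (σ : ℂ) (hσ : σ = 1 ∨ σ = -1)
    (hB : adjoint B = B) (hG₂ : adjoint G₂ = G₂)
    (hid : (1 / (2 * Complex.I)) • (B ∘L B ∘L P - adjoint P ∘L B ∘L B)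
        = σ • (adjoint G₁ ∘L G₁ + adjoint G₂ ∘L G₂) + E + F)
    (hfact : B ∘L B = G₂ ∘L Hop + J) :
    ∀ c : ℝ, 0 < c → c < 2 → ∀ u : H,
      ‖G₁ u‖ ^ 2 + (1 - c / 2) * ‖G₂ u‖ ^ 2
        ≤ (1 / (2 * c)) * ‖Hop (P u)‖ ^ 2
          + |(inner ℂ u (J (P u)) : ℂ).im|
          + ‖(inner ℂ u (E u) : ℂ)‖
          + ‖(inner ℂ u (F u) : ℂ)‖ := by
  intro c hc _ u
  have hadj : adjoint (B ∘L B ∘L P) = adjoint P ∘L B ∘L B := by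
    simp only [adjoint_comp, hB, comp_assoc]
  have hIm : ((⟪u, B (B (P u))⟫_ℂ).im : ℂ) =
      σ * (‖G₁ u‖ ^ 2 + ‖G₂ u‖ ^ 2 : ℝ) + ⟪u, E u⟫_ℂ + ⟪u, F u⟫_ℂ := by
    rw [← hadj] at hid
    simpa [mul_add, inner_add_right, inner_smul_right, adjoint_inner_right,
      inner_self_eq_norm_sq_to_K]
      using im_inner_apply_self_eq_of_commutator_eq hid u
  have hsum : ‖G₁ u‖ ^ 2 + ‖G₂ u‖ ^ 2
      ≤ |(⟪u, B (B (P u))⟫_ℂ).im| + ‖⟪u, E u⟫_ℂ‖ + ‖⟪u, F u⟫_ℂ‖ :=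
    Complex.le_abs_add_norm_add_norm_of_ofReal_eq hσ (by positivity) hIm
  have hsplit :
      |(⟪u, B (B (P u))⟫_ℂ).im| ≤ ‖G₂ u‖ * ‖Hop (P u)‖ + |(⟪u, J (P u)⟫_ℂ).im| := by
    rw [← comp_apply B B, im_inner_apply_eq_of_eq_comp_add hG₂ hfact]
    exact (abs_add_le _ _).trans
      (add_le_add_left ((Complex.abs_im_le_norm _).trans (norm_inner_le_norm _ _)) _)
  have hyoung := two_mul_le_add_mul_sq (a := ‖G₂ u‖) (b := ‖Hop (P u)‖) hc
  rw [show c⁻¹ = 2 * (1 / (2 * c)) by ring] at hyoung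
  linarith
end

section
/- Suppose in addition to the hypotheses of the basic commutator inequality that there is a further term: (1/2i)(B²(P − iQ) − (P* + iQ)B²) = −(G₁*G₁ + G₂*G₂) − BQB + E + F with Q = Q* positive semidefinite and B = B*. Then ⟨Bu, QBu⟩ ≥ 0 and hence ‖G₁u‖² + (1 − c/2)‖G₂u‖² + ⟨Bu, QBu⟩ ≤ (1/(2c))‖H(P−iQ)u‖² + |Im⟨u, J(P−iQ)u⟩| + |⟨u, Eu⟩| + |⟨u, Fu⟩|, for 0 < c < 2, where B² = G₂H + J; in particular the left-hand side terms are individually bounded by the right-hand side. -/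
/-!
Since `B²` is self-adjoint and `(P - iQ)* = P* + iQ`, pairing the operator identity with `u`
turns its left side into `Im ⟨u, B²(P - iQ)u⟩`. Writing `B² = G₂H + J`, the `G₂` part is
`Im ⟨G₂u, H(P - iQ)u⟩`, which Cauchy–Schwarz and `ab ≤ (c/2)a² + (1/2c)b²` bound by
`(c/2)‖G₂u‖² + (1/2c)‖H(P - iQ)u‖²`; the remaining terms are bounded by their absolute values.
-/

open ContinuousLinearMap

namespace ContinuousLinearMap

variable {H : Type*} [NormedAddCommGroup H] [InnerProductSpace ℂ H] [CompleteSpace H]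

theorem adjoint_sub_I_smul {P Q : H →L[ℂ] H} (hQ : adjoint Q = Q) :
    adjoint (P - Complex.I • Q) = adjoint P + Complex.I • Q := by
  rw [map_sub, LinearIsometryEquiv.map_smulₛₗ, hQ, Complex.conj_I, neg_smul, sub_neg_eq_add]

theorem inner_smul_sub_adjoint_comp_apply {A T : H →L[ℂ] H} (hA : adjoint A = A) (u : H) :
    inner ℂ u (((1 / (2 * Complex.I)) • (A ∘L T - adjoint T ∘L A)) u)
      = ((inner ℂ u (A (T u))).im : ℂ) := by
  have hconj : inner ℂ u (adjoint T (A u)) = (starRingEnd ℂ) (inner ℂ u (A (T u))) := by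
    rw [adjoint_inner_right, ← hA, adjoint_inner_right, hA, inner_conj_symm]
  simp only [smul_apply, sub_apply, comp_apply, inner_smul_right, inner_sub_right, hconj,
    Complex.sub_conj]
  field_simp
  push_cast
  ring

theorem im_inner_sq_comp_eq {B T Q G₁ G₂ E F : H →L[ℂ] H} (hB : adjoint B = B)
    (hid : (1 / (2 * Complex.I)) • (B ∘L B ∘L T - adjoint T ∘L B ∘L B)
      = -(adjoint G₁ ∘L G₁ + adjoint G₂ ∘L G₂) - B ∘L Q ∘L B + E + F) (u : H) :
    (inner ℂ u (B (B (T u)))).im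
      = -‖G₁ u‖ ^ 2 - ‖G₂ u‖ ^ 2 - (inner ℂ (B u) (Q (B u))).re
        + (inner ℂ u (E u)).re + (inner ℂ u (F u)).re := by
  have hBB : adjoint (B ∘L B) = B ∘L B := by rw [adjoint_comp, hB]
  have him : inner ℂ u (((1 / (2 * Complex.I)) • (B ∘L B ∘L T - adjoint T ∘L B ∘L B)) u)
      = ((inner ℂ u (B (B (T u)))).im : ℂ) :=
    inner_smul_sub_adjoint_comp_apply hBB u
  have hpair := congrArg (fun A : H →L[ℂ] H => (inner ℂ u (A u)).re) hid
  simp only [him, Complex.ofReal_re, sub_apply, add_apply, neg_apply, inner_sub_right,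
    inner_add_right, inner_neg_right, Complex.sub_re, Complex.add_re, Complex.neg_re] at hpair
  have hBQB : inner ℂ u ((B ∘L Q ∘L B) u) = inner ℂ (B u) (Q (B u)) := by
    rw [comp_apply, comp_apply, ← adjoint_inner_left, hB]
  rw [hpair, hBQB, apply_norm_sq_eq_inner_adjoint_right G₁, apply_norm_sq_eq_inner_adjoint_right G₂,
    RCLike.re_to_complex, RCLike.re_to_complex]
  ring

end ContinuousLinearMap

theorem mul_le_half_mul_sq_add {a b c : ℝ} (hc : 0 < c) :
    a * b ≤ c / 2 * a ^ 2 + 1 / (2 * c) * b ^ 2 := by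
  have := two_mul_le_add_mul_sq (a := a) (b := b) hc
  have hrhs : c / 2 * a ^ 2 + 1 / (2 * c) * b ^ 2 = (c * a ^ 2 + c⁻¹ * b ^ 2) / 2 := by ring
  linarith

theorem neg_im_inner_le {H : Type*} [NormedAddCommGroup H] [InnerProductSpace ℂ H]
    (x y : H) {c : ℝ} (hc : 0 < c) :
    -(inner ℂ x y).im ≤ c / 2 * ‖x‖ ^ 2 + 1 / (2 * c) * ‖y‖ ^ 2 :=
  calc -(inner ℂ x y).im ≤ ‖inner ℂ x y‖ := (neg_le_abs _).trans (Complex.abs_im_le_norm _)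
    _ ≤ ‖x‖ * ‖y‖ := norm_inner_le_norm x y
    _ ≤ _ := mul_le_half_mul_sq_add hc

/-- The key estimate for the τ-family theorem: if
`(1/2i)(B²(P − iQ) − (P* + iQ)B²) = −(G₁*G₁ + G₂*G₂) − BQB + E + F` with `Q = Q*`
positive semidefinite, `B = B*`, `G₂ = G₂*`, and `B² = G₂H + J`, then `⟨Bu, QBu⟩ ≥ 0` and
`‖G₁u‖² + (1 − c/2)‖G₂u‖² + ⟨Bu, QBu⟩ ≤ (1/(2c))‖H(P−iQ)u‖² + |Im⟨u, J(P−iQ)u⟩|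
+ |⟨u, Eu⟩| + |⟨u, Fu⟩|` for `0 < c < 2`. -/
theorem tau_commutator_inequality {H : Type*} [NormedAddCommGroup H]
    [InnerProductSpace ℂ H] [CompleteSpace H]
    (B P Q G₁ G₂ E F Hop J : H →L[ℂ] H)
    (hQ : adjoint Q = Q)
    (hQpos : ∀ v : H, 0 ≤ (inner ℂ v (Q v) : ℂ).re)
    (hB : adjoint B = B) (hG₂ : adjoint G₂ = G₂)
    (hid : (1 / (2 * Complex.I)) •
          (B ∘L B ∘L (P - Complex.I • Q) - (adjoint P + Complex.I • Q) ∘L B ∘L B)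
        = -(adjoint G₁ ∘L G₁ + adjoint G₂ ∘L G₂) - B ∘L Q ∘L B + E + F)
    (hfact : B ∘L B = G₂ ∘L Hop + J) :
    ∀ c : ℝ, 0 < c → c < 2 → ∀ u : H,
      0 ≤ (inner ℂ (B u) (Q (B u)) : ℂ).re ∧
      ‖G₁ u‖ ^ 2 + (1 - c / 2) * ‖G₂ u‖ ^ 2 + (inner ℂ (B u) (Q (B u)) : ℂ).re
        ≤ (1 / (2 * c)) * ‖Hop ((P - Complex.I • Q) u)‖ ^ 2
          + |(inner ℂ u (J ((P - Complex.I • Q) u)) : ℂ).im|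
          + ‖(inner ℂ u (E u) : ℂ)‖
          + ‖(inner ℂ u (F u) : ℂ)‖ := by
  intro c hc _ u
  refine ⟨hQpos (B u), ?_⟩
  rw [← adjoint_sub_I_smul hQ] at hid
  have hquad := im_inner_sq_comp_eq hB hid u
  have hsplit : B (B ((P - Complex.I • Q) u))
      = G₂ (Hop ((P - Complex.I • Q) u)) + J ((P - Complex.I • Q) u) :=
    DFunLike.congr_fun hfact _
  rw [hsplit, inner_add_right, ← adjoint_inner_left, hG₂, Complex.add_im] at hquad
  linarith [neg_im_inner_le (G₂ u) (Hop ((P - Complex.I • Q) u)) hc,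
    neg_le_abs (inner ℂ u (J ((P - Complex.I • Q) u))).im,
    Complex.re_le_norm (inner ℂ u (E u)), Complex.re_le_norm (inner ℂ u (F u))]
end
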